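/- arXiv:1507.04766 — 3 statements merged into one kernel-verified Lean document; each statement's English description precedes it below -/
import Mathlib

section
/- Let $G = \mathrm{GL}_2(\mathbb{F}_p)$, $B \subset G$ the upper-triangular Borel subgroup, and let $\chi = \eta^a \otimes \eta^b : B \to \mathbb{Z}_p^\times$ be a character (given by $\begin{pmatrix} x & * \\ 0 & y\end{pmatrix} \mapsto \eta(x)^a \eta(y)^b$, where $\eta : \mathbb{F}_p^\times \to \mathbb{Z}_p^\times$ is the Teichmüller character) with $a \not\equiv b \pmod{p-1}$. Let $s = \begin{pmatrix} 0 & 1 \\ 1 & 0 \end{pmatrix}$ and define the intertwining operators $T_\chi : \mathrm{Ind}_B^G \chi \to \mathrm{Ind}_B^G \chi^s$ and $T_{\chi^s} : \mathrm{Ind}_B^G \chi^s \to \mathrm{Ind}_B^G \chi$ by $(T_\chi f)(g) = \sum_{u \in U} f(s u g)$, where $U$ is the group of upper-triangular unipotent matrices and $\chi^s = \eta^b \otimes \eta^a$. Then $T_{\chi^s} \circ T_\chi = p \cdot \mathrm{id}$ on $\mathrm{Ind}_B^G \chi$ (the $\mathbb{Z}_p$-module of functions $f : G \to \mathbb{Z}_p$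 with $f(bg) = \chi(b) f(g)$). -/
open Matrix Finset

/-- Auxiliary: sum of a nontrivial multiplicative character over `(ZMod p)ˣ` vanishes. -/
theorem charsum_aux (p : ℕ) [Fact p.Prime] (a b : ℕ) (hab : ¬ a ≡ b [MOD p - 1])
    (η : ZMod p → ℤ_[p])
    (hηmul : ∀ x y : ZMod p, η (x * y) = η x * η y)
    (hηred : ∀ x : ZMod p, PadicInt.toZMod (η x) = x) :
    ∑ x ∈ (univ.erase (0 : ZMod p)), η x⁻¹ ^ a * η x ^ b = 0 := by
  have hη1 : η 1 = 1 := by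
    have h1 : η 1 ≠ 0 := by
      intro h
      have := hηred 1
      rw [h, map_zero] at this
      exact one_ne_zero this.symm
    have h : η 1 * 1 = η 1 * η 1 := by rw [mul_one, ← hηmul, mul_one]
    exact (mul_left_cancel₀ h1 h).symm
  obtain ⟨t, ht⟩ := IsCyclic.exists_generator (α := (ZMod p)ˣ)
  have hto : orderOf t = p - 1 := by
    rw [orderOf_eq_card_of_forall_mem_zpowers ht, Nat.card_eq_fintype_card, ZMod.card_units p]
  have htne : (t : ZMod p) ≠ 0 := t.ne_zero
  have hFt : η (↑t : ZMod p)⁻¹ ^ a * η ↑t ^ b ≠ 1 := by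
    intro hFt1
    have hinv : η (↑t : ZMod p)⁻¹ * η ↑t = 1 := by rw [← hηmul, inv_mul_cancel₀ htne, hη1]
    have h2 : η ↑t ^ b = η ↑t ^ a := by
      calc η (↑t : ZMod p) ^ b = (η (↑t : ZMod p)⁻¹ * η ↑t)^a * η ↑t ^ b := by
            rw [hinv, one_pow, one_mul]
        _ = (η (↑t : ZMod p)⁻¹ ^ a * η ↑t ^ b) * η ↑t ^ a := by ring
        _ = η ↑t ^ a := by rw [hFt1, one_mul]
    have h3 : (↑t : ZMod p) ^ b = (↑t : ZMod p) ^ a := by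
      have := congrArg PadicInt.toZMod h2
      simpa [map_pow, hηred] using this
    have h4 : t ^ b = t ^ a := Units.ext (by simpa using h3)
    have h5 := pow_eq_pow_iff_modEq.mp h4.symm
    rw [hto] at h5
    exact hab h5
  have key : (η (↑t : ZMod p)⁻¹ ^ a * η ↑t ^ b) * ∑ x ∈ univ.erase (0:ZMod p), η x⁻¹ ^ a * η x ^ b
      = ∑ x ∈ univ.erase (0:ZMod p), η x⁻¹ ^ a * η x ^ b := by
    rw [Finset.mul_sum]
    have hm : ∀ x : ZMod p, (η (↑t : ZMod p)⁻¹ ^ a * η ↑t ^ b) * (η x⁻¹ ^ a * η x ^ b)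
        = η ((↑t : ZMod p) * x)⁻¹ ^ a * η (↑t * x) ^ b := by
      intro x
      rw [mul_inv, hηmul, hηmul]
      ring
    simp only [hm]
    apply Finset.sum_equiv (Equiv.mulLeft₀ (↑t : ZMod p) htne)
    · intro i; simp [htne]
    · intro i hi; rfl
  have hne := sub_ne_zero.mpr hFt
  rcases mul_eq_zero.mp (show (η (↑t : ZMod p)⁻¹ ^ a * η ↑t ^ b - 1) *
      ∑ x ∈ univ.erase (0:ZMod p), η x⁻¹ ^ a * η x ^ b = 0 by
      rw [sub_mul, one_mul, key, sub_self]) with h | h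
  · exact absurd h hne
  · exact h

/-- For a regular character `χ = η^a ⊗ η^b` of the Borel of `GL₂(𝔽_p)` with values in `ℤ_p`
(`η` the Teichmüller character, characterized by being multiplicative and reducing to the
identity mod `p`), the composition of the two intertwining operators
`T_{χˢ} ∘ T_χ` on `Ind_B^G χ` is multiplication by `p`. -/
theorem stmt5 (p : ℕ) [Fact p.Prime] (a b : ℕ) (hab : ¬ a ≡ b [MOD p - 1])
    (η : ZMod p → ℤ_[p])
    (hηmul : ∀ x y : ZMod p, η (x * y) = η x * η y)
    (hηred : ∀ x : ZMod p, PadicInt.toZMod (η x) = x)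
    (f : Matrix (Fin 2) (Fin 2) (ZMod p) → ℤ_[p])
    -- f ∈ Ind_B^G χ : f(Bg) = χ(B) f(g) for B upper-triangular invertible
    (hf : ∀ B g : Matrix (Fin 2) (Fin 2) (ZMod p), IsUnit B.det → B 1 0 = 0 →
      f (B * g) = η (B 0 0) ^ a * η (B 1 1) ^ b * f g) :
    -- (T_{χˢ} (T_χ f))(g) = p · f(g)
    ∀ g : Matrix (Fin 2) (Fin 2) (ZMod p),
      ∑ y : ZMod p, ∑ x : ZMod p,
        f (!![0, 1; 1, 0] * !![1, x; 0, 1] * !![0, 1; 1, 0] * !![1, y; 0, 1] * g)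
      = (p : ℤ_[p]) * f g := by
  intro g
  have hη1 : η 1 = 1 := by
    have h1 : η 1 ≠ 0 := by
      intro h
      have := hηred 1
      rw [h, map_zero] at this
      exact one_ne_zero this.symm
    have h : η 1 * 1 = η 1 * η 1 := by rw [mul_one, ← hηmul, mul_one]
    exact (mul_left_cancel₀ h1 h).symm
  have key : ∀ x y : ZMod p,
      f (!![0, 1; 1, 0] * !![1, x; 0, 1] * !![0, 1; 1, 0] * !![1, y; 0, 1] * g)
      = f (!![1, y; x, x*y+1] * g) := by
    intro x y
    congr 2
    simp [Matrix.mul_fin_two]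
  simp only [key]
  rw [Finset.sum_comm, ← Finset.sum_erase_add _ _ (Finset.mem_univ (0 : ZMod p))]
  have h0 : ∑ y : ZMod p, f (!![1, y; (0:ZMod p), 0*y+1] * g) = (p : ℤ_[p]) * f g := by
    have hc : ∀ y : ZMod p, f (!![1, y; (0:ZMod p), 0*y+1] * g) = f g := by
      intro y
      have h := hf !![1, y; 0, 0*y+1] g (by simp [Matrix.det_fin_two_of]) (by simp)
      simpa [hη1] using h
    simp only [hc]
    simp [Finset.card_univ, ZMod.card, nsmul_eq_mul]
  have hnz : ∑ x ∈ univ.erase (0:ZMod p), ∑ y : ZMod p, f (!![1,y;x,x*y+1]*g) = 0 := by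
    have step : ∀ x ∈ univ.erase (0:ZMod p), ∑ y : ZMod p, f (!![1,y;x,x*y+1]*g)
        = (η (-x⁻¹)^a * η x ^ b) * ∑ z : ZMod p, f (!![0,1;1,z]*g) := by
      intro x hx
      have hx0 : x ≠ 0 := by simpa using (Finset.mem_erase.mp hx).1
      have hdecomp : ∀ y : ZMod p, f (!![1,y;x,x*y+1]*g)
          = (η (-x⁻¹)^a * η x ^ b) * f (!![0,1;1,y+x⁻¹]*g) := by
        intro y
        have hdet : IsUnit (!![-x⁻¹, 1; 0, x] : Matrix (Fin 2) (Fin 2) (ZMod p)).det := by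
          have : (!![-x⁻¹, 1; 0, x] : Matrix (Fin 2) (Fin 2) (ZMod p)).det = -1 := by
            simp [Matrix.det_fin_two_of, inv_mul_cancel₀ hx0]
          rw [this]; exact isUnit_one.neg
        have hB := hf !![-x⁻¹, 1; 0, x] (!![0,1;1,y+x⁻¹]*g) hdet (by simp)
        have hM : (!![-x⁻¹, 1; 0, x] : Matrix (Fin 2) (Fin 2) (ZMod p)) * !![0,1;1,y+x⁻¹]
            = !![1,y;x,x*y+1] := by
          simp [Matrix.mul_fin_two, mul_add, mul_inv_cancel₀ hx0]
        rw [← Matrix.mul_assoc, hM] at hB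
        simpa using hB
      simp only [hdecomp]
      rw [← Finset.mul_sum]
      congr 1
      apply Fintype.sum_equiv (Equiv.addRight x⁻¹)
      intro y
      rfl
    rw [Finset.sum_congr rfl step, ← Finset.sum_mul]
    have hc : ∑ x ∈ univ.erase (0:ZMod p), η (-x⁻¹)^a * η x ^ b = 0 := by
      have he : ∀ x : ZMod p, η (-x⁻¹)^a * η x ^ b = η (-1)^a * (η x⁻¹ ^ a * η x ^ b) := by
        intro x
        rw [show (-x⁻¹ : ZMod p) = -1 * x⁻¹ by ring, hηmul]
        ring
      simp only [he]
      rw [← Finset.mul_sum, charsum_aux p a b hab η hηmul hηred, mul_zero]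
    rw [hc, zero_mul]
  rw [hnz, zero_add, h0]
end

section
/- Let $G = \mathrm{GL}_3(\mathbb{F}_p)$, $B \subset G$ the upper-triangular Borel, and $\chi = \eta^a \otimes \eta^b \otimes \eta^c : B \to \mathbb{Z}_p^\times$ with $a, b, c$ pairwise distinct modulo $p - 1$ ($\eta$ the Teichmüller character). Let $s_0 \in S_3$ be the longest element $(13)$, and define $T : \mathrm{Ind}_B^G \chi \to \mathrm{Ind}_B^G \chi^{s_0}$ and $T' : \mathrm{Ind}_B^G \chi^{s_0} \to \mathrm{Ind}_B^G \chi$ by $(Tf)(g) = \sum_{u \in U_{s_0}} f(P_{s_0} u g)$ and similarly for $T'$, where $U_{s_0} = U$ is the full unipotent upper-triangular subgroup and $P_{s_0}$ its permutation matrix. Then $T' \circ T = p^3 \cdot \mathrm{id}$. -/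
open Matrix Finset

/-!
Write `F h = sumUnipotent f g h = ∑_{u ∈ U} f (h u g)`. Since `w₀ U w₀` is the lower
unitriangular group `Ū`, the left-hand side is `∑_{v ∈ Ū} F v`. The function `F` is left
`(B, χ)`-equivariant and right `U`-invariant, so on the Bruhat cell `B w U` it equals `F w` times a
character of the diagonal of the Borel part. Parametrising `Ū` cell by cell, the sum over every
cell other than `{1}` becomes a multiple of a full sum of a character `χᵢ χⱼ⁻¹` with `i ≠ j`, which
vanishes because `χ` is regular; the identity cell contributes `F 1 = |K|³ f g`.
-/

section MulCharLemmas

variable {K R : Type*} [Field K] [CommRing R]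

theorem MulChar.apply_neg (χ : MulChar K R) (x : K) : χ (-x) = χ (-1) * χ x := by
  rw [neg_eq_neg_one_mul, map_mul]

theorem MulChar.pow_ne_pow_of_injective [Fintype K] {χ : MulChar K R}
    (hχ : Function.Injective χ) {m n : ℕ} (h : ¬ m ≡ n [MOD Fintype.card K - 1]) :
    χ ^ m ≠ χ ^ n := by
  classical
  obtain ⟨γ, hγ⟩ := IsCyclic.exists_generator (α := Kˣ)
  have horder : orderOf γ = Fintype.card K - 1 := by
    rw [orderOf_eq_card_of_forall_mem_zpowers hγ, Nat.card_eq_fintype_card, Fintype.card_units]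
  intro hmn
  have hγmn : χ (γ ^ m : Kˣ) = χ (γ ^ n : Kˣ) := by
    simpa only [Units.val_pow_eq_pow_val, map_pow, MulChar.pow_apply_coe] using
      congrArg (fun ψ : MulChar K R => ψ γ) hmn
  exact h (horder ▸ pow_eq_pow_iff_modEq.1 (Units.ext (hχ hγmn)))

variable [IsDomain R] {η : K → R}

theorem apply_one_of_leftInverse (π : R →+* K) (hmul : ∀ x y, η (x * y) = η x * η y)
    (hη : Function.LeftInverse π η) : η 1 = 1 := by
  have hidem : IsIdempotentElem (η 1) := by rw [IsIdempotentElem, ← hmul, mul_one]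
  refine (IsIdempotentElem.iff_eq_zero_or_one.1 hidem).resolve_left fun h => ?_
  simpa [h] using hη 1

theorem apply_zero_of_leftInverse (π : R →+* K) (hmul : ∀ x y, η (x * y) = η x * η y)
    (hη : Function.LeftInverse π η) : η 0 = 0 := by
  have hidem : IsIdempotentElem (η 0) := by rw [IsIdempotentElem, ← hmul, mul_zero]
  refine (IsIdempotentElem.iff_eq_zero_or_one.1 hidem).resolve_right fun h => ?_
  simpa [h] using hη 0

def MulChar.ofLeftInverse (π : R →+* K) (η : K → R) (hmul : ∀ x y, η (x * y) = η x * η y)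
    (hη : Function.LeftInverse π η) : MulChar K R where
  toFun := η
  map_one' := apply_one_of_leftInverse π hmul hη
  map_mul' := hmul
  map_nonunit' x hx := by
    obtain rfl : x = 0 := by simpa using hx
    exact apply_zero_of_leftInverse π hmul hη

end MulCharLemmas

section CharacterSums

variable {K R : Type*} [Field K] [Fintype K] [CommRing R] [IsDomain R]

theorem sum_eq_apply_zero_of_eq_mulChar_mul {φ : K → R} {ρ : MulChar K R} (hρ : ρ ≠ 1) {c : R}
    (h : ∀ x ≠ 0, φ x = ρ x * c) : ∑ x, φ x = φ 0 := by
  classical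
  calc ∑ x, φ x = ∑ x, ((if x = 0 then φ 0 else 0) + ρ x * c) := by
        refine Fintype.sum_congr _ _ fun x => ?_
        rcases eq_or_ne x 0 with rfl | hx
        · simp [MulChar.map_zero]
        · simp [hx, h x hx]
    _ = φ 0 := by simp [sum_add_distrib, ← sum_mul, MulChar.sum_eq_zero_of_ne_one hρ]

theorem sum_sum_ite_mul_eq_eq_zero [DecidableEq K] {ρ : MulChar K R} (hρ : ρ ≠ 1) {y : K}
    (hy : y ≠ 0) (c : R) : ∑ x, ∑ z, (if x * z = y then ρ x * c else 0) = 0 := by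
  have hinner : ∀ x, ∑ z, (if x * z = y then ρ x * c else 0) = ρ x * c := by
    intro x
    rcases eq_or_ne x 0 with rfl | hx
    · simp [hy.symm, MulChar.map_zero]
    · simp_rw [← eq_inv_mul_iff_mul_eq₀ hx]
      simp
  simp [hinner, ← sum_mul, MulChar.sum_eq_zero_of_ne_one hρ]

theorem sum_sum_mulChar_mul_sub {ρ : MulChar K R} (hρ : ρ ≠ 1) (y : K) :
    ∑ x, ∑ z, ρ (x * z - y) = Fintype.card K * ρ (-y) := by
  rw [Fintype.sum_eq_single 0 fun x hx => ?_]
  · simp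
  · rw [← MulChar.sum_eq_zero_of_ne_one hρ]
    exact Fintype.sum_equiv ((Equiv.mulLeft₀ x hx).trans (Equiv.subRight y)) _ _ fun z => rfl

end CharacterSums

section PrincipalSeries

variable {K R : Type*} [Field K] [Fintype K] [CommRing R]

-- `f ∈ Ind_B^G (χ₁ ⊗ χ₂ ⊗ χ₃)`
def MemIndBorel (χ₁ χ₂ χ₃ : MulChar K R) (f : Matrix (Fin 3) (Fin 3) K → R) : Prop :=
  ∀ d₁ d₂ d₃ u v t : K, d₁ ≠ 0 → d₂ ≠ 0 → d₃ ≠ 0 → ∀ g,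
    f (!![d₁, u, v; 0, d₂, t; 0, 0, d₃] * g) = χ₁ d₁ * χ₂ d₂ * χ₃ d₃ * f g

def sumUnipotent (f : Matrix (Fin 3) (Fin 3) K → R) (g h : Matrix (Fin 3) (Fin 3) K) : R :=
  ∑ x, ∑ y, ∑ z, f (h * !![1, x, y; 0, 1, z; 0, 0, 1] * g)

variable {χ₁ χ₂ χ₃ : MulChar K R} {f : Matrix (Fin 3) (Fin 3) K → R} {g : Matrix (Fin 3) (Fin 3) K}

theorem sumUnipotent_mul_unipotent (h : Matrix (Fin 3) (Fin 3) K) (a b c : K) :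
    sumUnipotent f g (h * !![1, a, b; 0, 1, c; 0, 0, 1]) = sumUnipotent f g h := by
  have hmul : ∀ x y z : K, h * !![1, a, b; 0, 1, c; 0, 0, 1] * !![1, x, y; 0, 1, z; 0, 0, 1] =
      h * !![1, x + a, y + a * z + b; 0, 1, z + c; 0, 0, 1] := by
    intro x y z
    rw [Matrix.mul_assoc]
    congr 1
    ext i j
    fin_cases i <;> fin_cases j <;> simp
    ring
  simp only [sumUnipotent, hmul]
  refine Fintype.sum_equiv (Equiv.addRight a) _ _ fun x => ?_
  conv_lhs => rw [sum_comm]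
  conv_rhs => rw [sum_comm]
  refine Fintype.sum_equiv (Equiv.addRight c) _ _ fun z => ?_
  exact Fintype.sum_equiv (Equiv.addRight (a * z + b)) _ _ fun y => by simp [add_assoc]

theorem sumUnipotent_one (hf : MemIndBorel χ₁ χ₂ χ₃ f) :
    sumUnipotent f g 1 = Fintype.card K ^ 3 * f g := by
  have hU : ∀ x y z, f (!![1, x, y; 0, 1, z; 0, 0, 1] * g) = f g := fun x y z => by
    simpa using hf 1 1 1 x y z one_ne_zero one_ne_zero one_ne_zero g
  simp only [sumUnipotent, Matrix.one_mul, hU, sum_const, card_univ, nsmul_eq_mul]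
  ring

theorem sumUnipotent_eq_of_eq_mul (hf : MemIndBorel χ₁ χ₂ χ₃ f) {d₁ d₂ d₃ u v t x y z : K}
    (hd₁ : d₁ ≠ 0) (hd₂ : d₂ ≠ 0) (hd₃ : d₃ ≠ 0) {h w : Matrix (Fin 3) (Fin 3) K}
    (hh : h = !![d₁, u, v; 0, d₂, t; 0, 0, d₃] * w * !![1, x, y; 0, 1, z; 0, 0, 1]) :
    sumUnipotent f g h = χ₁ d₁ * χ₂ d₂ * χ₃ d₃ * sumUnipotent f g w := by
  subst hh
  rw [sumUnipotent_mul_unipotent]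
  simp only [sumUnipotent, Matrix.mul_assoc, hf _ _ _ _ _ _ hd₁ hd₂ hd₃, mul_sum]

theorem sumUnipotent_lower_z (hf : MemIndBorel χ₁ χ₂ χ₃ f) {z : K} (hz : z ≠ 0) :
    sumUnipotent f g !![1, 0, 0; z, 1, 0; 0, 0, 1] =
      (χ₂ * χ₁⁻¹) z * (χ₁ (-1) * sumUnipotent f g !![0, 1, 0; 1, 0, 0; 0, 0, 1]) := by
  have hbruhat : !![1, 0, 0; z, 1, 0; 0, 0, 1] = !![-z⁻¹, 1, 0; 0, z, 0; 0, 0, 1] *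
      !![0, 1, 0; 1, 0, 0; 0, 0, 1] * !![1, z⁻¹, 0; 0, 1, 0; 0, 0, 1] := by
    ext i j
    fin_cases i <;> fin_cases j <;> simp [hz]
  rw [sumUnipotent_eq_of_eq_mul hf (neg_ne_zero.2 (inv_ne_zero hz)) hz one_ne_zero hbruhat]
  simp only [MulChar.mul_apply, MulChar.inv_apply', MulChar.apply_neg χ₁ z⁻¹, map_one]
  ring

theorem sumUnipotent_lower_x (hf : MemIndBorel χ₁ χ₂ χ₃ f) {x : K} (hx : x ≠ 0) :
    sumUnipotent f g !![1, 0, 0; 0, 1, 0; 0, x, 1] =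
      (χ₃ * χ₂⁻¹) x * (χ₂ (-1) * sumUnipotent f g !![1, 0, 0; 0, 0, 1; 0, 1, 0]) := by
  have hbruhat : !![1, 0, 0; 0, 1, 0; 0, x, 1] = !![1, 0, 0; 0, -x⁻¹, 1; 0, 0, x] *
      !![1, 0, 0; 0, 0, 1; 0, 1, 0] * !![1, 0, 0; 0, 1, x⁻¹; 0, 0, 1] := by
    ext i j
    fin_cases i <;> fin_cases j <;> simp [hx]
  rw [sumUnipotent_eq_of_eq_mul hf one_ne_zero (neg_ne_zero.2 (inv_ne_zero hx)) hx hbruhat]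
  simp only [MulChar.mul_apply, MulChar.inv_apply', MulChar.apply_neg χ₂ x⁻¹, map_one]
  ring

theorem sumUnipotent_lower_xz (hf : MemIndBorel χ₁ χ₂ χ₃ f) {x z : K} (hx : x ≠ 0)
    (hz : z ≠ 0) :
    sumUnipotent f g !![1, 0, 0; z, 1, 0; 0, x, 1] =
      (χ₂ * χ₁⁻¹) z * ((χ₃ * χ₁⁻¹) x * sumUnipotent f g !![0, 0, 1; 1, 0, 0; 0, 1, 0]) := by
  have hbruhat : !![1, 0, 0; z, 1, 0; 0, x, 1] = !![x⁻¹ * z⁻¹, 1, 0; 0, z, 1; 0, 0, x] *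
      !![0, 0, 1; 1, 0, 0; 0, 1, 0] * !![1, 0, -(x⁻¹ * z⁻¹); 0, 1, x⁻¹; 0, 0, 1] := by
    ext i j
    fin_cases i <;> fin_cases j <;> simp <;> grind
  rw [sumUnipotent_eq_of_eq_mul hf (mul_ne_zero (inv_ne_zero hx) (inv_ne_zero hz)) hz hx hbruhat]
  simp only [MulChar.mul_apply, MulChar.inv_apply', map_mul]
  ring

theorem sumUnipotent_lower_of_mul_eq (hf : MemIndBorel χ₁ χ₂ χ₃ f) {x y z : K} (hy : y ≠ 0)
    (hxz : x * z = y) :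
    sumUnipotent f g !![1, 0, 0; z, 1, 0; y, x, 1] =
      (χ₁ * χ₂⁻¹) x * (χ₁ (-y⁻¹) * χ₂ (-1) * χ₃ y *
        sumUnipotent f g !![0, 1, 0; 0, 0, 1; 1, 0, 0]) := by
  have hx : x ≠ 0 := left_ne_zero_of_mul (hxz ▸ hy)
  obtain rfl : z = x⁻¹ * y := by rw [← hxz, inv_mul_cancel_left₀ hx]
  have hbruhat : !![1, 0, 0; x⁻¹ * y, 1, 0; y, x, 1] =
      !![-x * y⁻¹, -y⁻¹, 1; 0, -x⁻¹, x⁻¹ * y; 0, 0, y] *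
      !![0, 1, 0; 0, 0, 1; 1, 0, 0] * !![1, x * y⁻¹, y⁻¹; 0, 1, 0; 0, 0, 1] := by
    ext i j
    fin_cases i <;> fin_cases j <;> simp <;> grind
  rw [sumUnipotent_eq_of_eq_mul hf (mul_ne_zero (neg_ne_zero.2 hx) (inv_ne_zero hy))
    (neg_ne_zero.2 (inv_ne_zero hx)) hy hbruhat]
  simp only [MulChar.mul_apply, MulChar.inv_apply', map_mul, neg_mul,
    MulChar.apply_neg χ₁ (x * y⁻¹), MulChar.apply_neg χ₁ y⁻¹, MulChar.apply_neg χ₂ x⁻¹]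
  ring

theorem sumUnipotent_lower_of_mul_ne (hf : MemIndBorel χ₁ χ₂ χ₃ f) {x y z : K} (hy : y ≠ 0)
    (hxz : x * z ≠ y) :
    sumUnipotent f g !![1, 0, 0; z, 1, 0; y, x, 1] =
      (χ₂ * χ₁⁻¹) (x * z - y) * (χ₂ (-y⁻¹) * χ₃ y *
        sumUnipotent f g !![0, 0, 1; 0, 1, 0; 1, 0, 0]) := by
  have hd : x * z - y ≠ 0 := sub_ne_zero.2 hxz
  have hbruhat : !![1, 0, 0; z, 1, 0; y, x, 1] =
      !![(x * z - y)⁻¹, -x * y⁻¹, 1; 0, -(x * z - y) * y⁻¹, z; 0, 0, y] *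
      !![0, 0, 1; 0, 1, 0; 1, 0, 0] * !![1, x * y⁻¹, y⁻¹; 0, 1, z * (x * z - y)⁻¹; 0, 0, 1] := by
    ext i j
    fin_cases i <;> fin_cases j <;> simp <;> grind
  rw [sumUnipotent_eq_of_eq_mul hf (inv_ne_zero hd)
    (mul_ne_zero (neg_ne_zero.2 hd) (inv_ne_zero hy)) hy hbruhat]
  simp only [MulChar.mul_apply, MulChar.inv_apply', map_mul, neg_mul,
    MulChar.apply_neg χ₂ ((x * z - y) * y⁻¹), MulChar.apply_neg χ₂ y⁻¹]
  ring

end PrincipalSeries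

section Intertwiner

variable {K R : Type*} [Field K] [Fintype K] [CommRing R] [IsDomain R]
variable {χ₁ χ₂ χ₃ : MulChar K R} {f : Matrix (Fin 3) (Fin 3) K → R} {g : Matrix (Fin 3) (Fin 3) K}

theorem sum_sum_sumUnipotent_lower_of_ne_zero (hf : MemIndBorel χ₁ χ₂ χ₃ f) (h₁₂ : χ₁ ≠ χ₂)
    {y : K} (hy : y ≠ 0) :
    ∑ x, ∑ z, sumUnipotent f g !![1, 0, 0; z, 1, 0; y, x, 1] =
      (χ₃ * χ₁⁻¹) y *
        (Fintype.card K * χ₁ (-1) * sumUnipotent f g !![0, 0, 1; 0, 1, 0; 1, 0, 0]) := by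
  classical
  set c₁ := χ₁ (-y⁻¹) * χ₂ (-1) * χ₃ y * sumUnipotent f g !![0, 1, 0; 0, 0, 1; 1, 0, 0]
  set c₀ := χ₂ (-y⁻¹) * χ₃ y * sumUnipotent f g !![0, 0, 1; 0, 1, 0; 1, 0, 0]
  have hcells : ∀ x z, sumUnipotent f g !![1, 0, 0; z, 1, 0; y, x, 1] =
      (if x * z = y then (χ₁ * χ₂⁻¹) x * c₁ else 0) + (χ₂ * χ₁⁻¹) (x * z - y) * c₀ := by
    intro x z
    by_cases hxz : x * z = y
    · simp [hxz, sumUnipotent_lower_of_mul_eq hf hy hxz, MulChar.map_zero, c₁]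
    · simp [hxz, sumUnipotent_lower_of_mul_ne hf hy hxz, c₀]
  simp only [hcells, sum_add_distrib, ← sum_mul,
    sum_sum_ite_mul_eq_eq_zero (mul_inv_eq_one.not.2 h₁₂) hy,
    sum_sum_mulChar_mul_sub (mul_inv_eq_one.not.2 h₁₂.symm), zero_add, c₀]
  simp only [MulChar.mul_apply, MulChar.inv_apply', inv_neg, MulChar.apply_neg χ₁ y⁻¹]
  have h₂ : χ₂ (-y) * χ₂ (-y⁻¹) = 1 := by
    rw [← map_mul, neg_mul_neg, mul_inv_cancel₀ hy, map_one]
  linear_combination (Fintype.card K * χ₁ (-1) * χ₁ y⁻¹ * χ₃ y *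
    sumUnipotent f g !![0, 0, 1; 0, 1, 0; 1, 0, 0]) * h₂

theorem sum_longestIntertwiner_comp (hf : MemIndBorel χ₁ χ₂ χ₃ f) (h₁₂ : χ₁ ≠ χ₂)
    (h₁₃ : χ₁ ≠ χ₃) (h₂₃ : χ₂ ≠ χ₃) (g : Matrix (Fin 3) (Fin 3) K) :
    ∑ x₁ : K, ∑ y₁ : K, ∑ z₁ : K, ∑ x₂ : K, ∑ y₂ : K, ∑ z₂ : K,
      f (!![0, 0, 1; 0, 1, 0; 1, 0, 0] * !![1, x₁, y₁; 0, 1, z₁; 0, 0, 1] *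
        !![0, 0, 1; 0, 1, 0; 1, 0, 0] * !![1, x₂, y₂; 0, 1, z₂; 0, 0, 1] * g) =
      Fintype.card K ^ 3 * f g := by
  have hconj : ∀ x y z : K, !![0, 0, 1; 0, 1, 0; 1, 0, 0] * !![1, x, y; 0, 1, z; 0, 0, 1] *
      !![0, 0, 1; 0, 1, 0; 1, 0, 0] = !![1, 0, 0; z, 1, 0; y, x, 1] := by
    intro x y z
    ext i j
    fin_cases i <;> fin_cases j <;> simp
  simp only [hconj]
  change ∑ x, ∑ y, ∑ z, sumUnipotent f g !![1, 0, 0; z, 1, 0; y, x, 1] = _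
  have hrow : ∀ x ≠ 0, ∑ z, sumUnipotent f g !![1, 0, 0; z, 1, 0; 0, x, 1] =
      (χ₃ * χ₂⁻¹) x * (χ₂ (-1) * sumUnipotent f g !![1, 0, 0; 0, 0, 1; 0, 1, 0]) := by
    intro x hx
    rw [sum_eq_apply_zero_of_eq_mulChar_mul (mul_inv_eq_one.not.2 h₁₂.symm)
      fun z hz => sumUnipotent_lower_xz hf hx hz]
    exact sumUnipotent_lower_x hf hx
  rw [sum_comm, sum_eq_apply_zero_of_eq_mulChar_mul (mul_inv_eq_one.not.2 h₁₃.symm)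
      fun y hy => sum_sum_sumUnipotent_lower_of_ne_zero hf h₁₂ hy,
    sum_eq_apply_zero_of_eq_mulChar_mul (mul_inv_eq_one.not.2 h₂₃.symm) hrow,
    sum_eq_apply_zero_of_eq_mulChar_mul (mul_inv_eq_one.not.2 h₁₂.symm)
      fun z hz => sumUnipotent_lower_z hf hz, ← one_fin_three, sumUnipotent_one hf]

end Intertwiner

/-- For a regular character `χ = η^a ⊗ η^b ⊗ η^c` of the Borel of `GL₃(𝔽_p)` with values in
`ℤ_p` (`η` the Teichmüller character), the composition of the two longest-element intertwining
operators `T' ∘ T` on `Ind_B^G χ` is multiplication by `p³`. -/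
theorem stmt6 (p : ℕ) [Fact p.Prime] (a b c : ℕ)
    (hab : ¬ a ≡ b [MOD p - 1]) (hbc : ¬ b ≡ c [MOD p - 1]) (hac : ¬ a ≡ c [MOD p - 1])
    (η : ZMod p → ℤ_[p])
    (hηmul : ∀ x y : ZMod p, η (x * y) = η x * η y)
    (hηred : ∀ x : ZMod p, PadicInt.toZMod (η x) = x)
    (f : Matrix (Fin 3) (Fin 3) (ZMod p) → ℤ_[p])
    -- f ∈ Ind_B^G χ : f(Bg) = χ(B) f(g) for B upper-triangular invertible
    (hf : ∀ B g : Matrix (Fin 3) (Fin 3) (ZMod p), IsUnit B.det →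
      B 1 0 = 0 → B 2 0 = 0 → B 2 1 = 0 →
      f (B * g) = η (B 0 0) ^ a * η (B 1 1) ^ b * η (B 2 2) ^ c * f g) :
    -- (T' (T f))(g) = p³ · f(g), where (T f)(g) = ∑_{u ∈ U} f (P_{s₀} u g)
    ∀ g : Matrix (Fin 3) (Fin 3) (ZMod p),
      ∑ x₁ : ZMod p, ∑ y₁ : ZMod p, ∑ z₁ : ZMod p,
        ∑ x₂ : ZMod p, ∑ y₂ : ZMod p, ∑ z₂ : ZMod p,
          f (!![0, 0, 1; 0, 1, 0; 1, 0, 0] * !![1, x₁, y₁; 0, 1, z₁; 0, 0, 1] *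
             !![0, 0, 1; 0, 1, 0; 1, 0, 0] * !![1, x₂, y₂; 0, 1, z₂; 0, 0, 1] * g)
      = (p : ℤ_[p]) ^ 3 * f g := by
  set χ := MulChar.ofLeftInverse PadicInt.toZMod η hηmul hηred
  have hχ : Function.Injective χ := Function.LeftInverse.injective hηred
  have hχpow (n : ℕ) {x : ZMod p} (hx : x ≠ 0) : (χ ^ n) x = η x ^ n :=
    MulChar.pow_apply_coe χ n (Units.mk0 x hx)
  have hf' : MemIndBorel (χ ^ a) (χ ^ b) (χ ^ c) f := by
    intro d₁ d₂ d₃ u v t hd₁ hd₂ hd₃ g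
    rw [hχpow a hd₁, hχpow b hd₂, hχpow c hd₃]
    exact hf _ g (by simp [det_fin_three, hd₁, hd₂, hd₃]) rfl rfl rfl
  have hne {m n : ℕ} (h : ¬ m ≡ n [MOD p - 1]) : χ ^ m ≠ χ ^ n :=
    χ.pow_ne_pow_of_injective hχ (by rwa [ZMod.card])
  simpa using sum_longestIntertwiner_comp hf' (hne hab) (hne hac) (hne hbc)
end

section
/- Let $A \subset M_2(\mathbb{Z}_p)$ be the $\mathbb{Z}_p$-subalgebra of matrices $\begin{pmatrix} a & pb \\ c & d \end{pmatrix}$ with $a,b,c,d \in \mathbb{Z}_p$ (i.e., those with upper-right entry divisible by $p$). For any commutative $\mathbb{Z}_p$-algebra $R$, the set of $\mathbb{Z}_p$-algebra homomorphisms $\varphi : A \to M_2(R)$ sending the idempotents $\begin{pmatrix}1&0\\0&0\end{pmatrix}$ and $\begin{pmatrix}0&0\\0&1\end{pmatrix}$ to the corresponding standard idempotents of $M_2(R)$ is in natural bijection with the set $\{(x,y) \in R^2 : xy = p\}$, via $\varphi \mapsto \left(\varphi\begin{pmatrix}0&p\\0&0\end{pmatrix}_{12},\ \varphi\begin{pmatrix}0&0\\1&0\end{pmatrix}_{21}\right)$.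 -/
open Matrix

/-- The `ℤ_p`-subalgebra of `M₂(ℤ_p)` of matrices whose upper-right entry is divisible
by `p`. -/
def Ealg (p : ℕ) [Fact p.Prime] : Subalgebra ℤ_[p] (Matrix (Fin 2) (Fin 2) ℤ_[p]) where
  carrier := {M | (p : ℤ_[p]) ∣ M 0 1}
  add_mem' := by
    intro a b ha hb
    simpa using dvd_add ha hb
  zero_mem' := by simp
  one_mem' := by simp
  mul_mem' := by
    intro a b ha hb
    have h : (a * b) 0 1 = a 0 0 * b 0 1 + a 0 1 * b 1 1 := by
      simp [Matrix.mul_apply, Fin.sum_univ_two]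
    show (p : ℤ_[p]) ∣ (a * b) 0 1
    rw [h]
    exact dvd_add (hb.mul_left _) (ha.mul_right _)
  algebraMap_mem' := by
    intro r
    show (p : ℤ_[p]) ∣ (algebraMap ℤ_[p] (Matrix (Fin 2) (Fin 2) ℤ_[p]) r) 0 1
    simp [Matrix.algebraMap_eq_diagonal]

theorem mem_Ealg (p : ℕ) [Fact p.Prime] (M : Matrix (Fin 2) (Fin 2) ℤ_[p]) :
    M ∈ Ealg p ↔ (p : ℤ_[p]) ∣ M 0 1 := Iff.rfl

section aux

variable (p : ℕ) [Fact p.Prime]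

open Classical in
noncomputable def pdiv (z : ℤ_[p]) : ℤ_[p] :=
  if h : (p : ℤ_[p]) ∣ z then h.choose else 0

lemma p_ne_zero' : (p : ℤ_[p]) ≠ 0 :=
  Nat.cast_ne_zero.mpr (Fact.out (p := p.Prime)).ne_zero

open Classical in
lemma pdiv_eq {z b : ℤ_[p]} (hz : z = (p : ℤ_[p]) * b) : pdiv p z = b := by
  have h : (p : ℤ_[p]) ∣ z := ⟨b, hz⟩
  rw [pdiv, dif_pos h]
  exact mul_left_cancel₀ (p_ne_zero' p) (h.choose_spec.symm.trans hz)

lemma pdiv_spec {z : ℤ_[p]} (h : (p : ℤ_[p]) ∣ z) : (p : ℤ_[p]) * pdiv p z = z := by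
  obtain ⟨b, rfl⟩ := h; rw [pdiv_eq p rfl]

@[simp] lemma pdiv_zero : pdiv p 0 = 0 := pdiv_eq p (by ring)

@[simp] lemma pdiv_pmul (b : ℤ_[p]) : pdiv p ((p : ℤ_[p]) * b) = b := pdiv_eq p rfl

@[simp] lemma pdiv_self : pdiv p (p : ℤ_[p]) = 1 := pdiv_eq p (by ring)

-- membership lemmas
lemma memE1 : !![1, 0; 0, 0] ∈ Ealg p := by rw [mem_Ealg]; simp
lemma memE2 : !![0, 0; 0, 1] ∈ Ealg p := by rw [mem_Ealg]; simp
lemma memE12 : !![0, (p : ℤ_[p]); 0, 0] ∈ Ealg p := by rw [mem_Ealg]; simp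
lemma memE21 : !![0, 0; 1, 0] ∈ Ealg p := by rw [mem_Ealg]; simp

variable (R : Type*) [CommRing R] [Algebra ℤ_[p] R]

noncomputable def matFunc (x y : R) (M : Matrix (Fin 2) (Fin 2) ℤ_[p]) :
    Matrix (Fin 2) (Fin 2) R :=
  !![algebraMap ℤ_[p] R (M 0 0), algebraMap ℤ_[p] R (pdiv p (M 0 1)) * x;
     algebraMap ℤ_[p] R (M 1 0) * y, algebraMap ℤ_[p] R (M 1 1)]

variable {p R}

lemma matFunc_one (x y : R) : matFunc p R x y 1 = 1 := by
  ext i j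
  fin_cases i <;> fin_cases j <;> simp [matFunc, Matrix.one_apply]

lemma matFunc_zero (x y : R) : matFunc p R x y 0 = 0 := by
  ext i j
  fin_cases i <;> fin_cases j <;> simp [matFunc]

lemma matFunc_mul (x y : R) (hxy : x * y = (p : R)) (M N : Matrix (Fin 2) (Fin 2) ℤ_[p])
    (hM : (p : ℤ_[p]) ∣ M 0 1) (hN : (p : ℤ_[p]) ∣ N 0 1) :
    matFunc p R x y (M * N) = matFunc p R x y M * matFunc p R x y N := by
  obtain ⟨b, hb⟩ := hM
  obtain ⟨c, hc⟩ := hN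
  have h01 : M 0 0 * ((p : ℤ_[p]) * c) + (p : ℤ_[p]) * b * N 1 1
      = (p : ℤ_[p]) * (M 0 0 * c + b * N 1 1) := by ring
  ext i j
  fin_cases i <;> fin_cases j
  · simp [matFunc, Matrix.mul_apply, Fin.sum_univ_two, hb, hc, h01,
      map_add, _root_.map_mul, map_natCast]
    rw [← hxy]; ring
  · simp [matFunc, Matrix.mul_apply, Fin.sum_univ_two, hb, hc, h01,
      map_add, _root_.map_mul, map_natCast]
    ring
  · simp [matFunc, Matrix.mul_apply, Fin.sum_univ_two, hb, hc, h01,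
      map_add, _root_.map_mul, map_natCast]
    ring
  · simp [matFunc, Matrix.mul_apply, Fin.sum_univ_two, hb, hc, h01,
      map_add, _root_.map_mul, map_natCast]
    rw [← hxy]; ring

lemma matFunc_add (x y : R) (M N : Matrix (Fin 2) (Fin 2) ℤ_[p])
    (hM : (p : ℤ_[p]) ∣ M 0 1) (hN : (p : ℤ_[p]) ∣ N 0 1) :
    matFunc p R x y (M + N) = matFunc p R x y M + matFunc p R x y N := by
  obtain ⟨b, hb⟩ := hM
  obtain ⟨c, hc⟩ := hN
  have h01 : (p : ℤ_[p]) * b + (p : ℤ_[p]) * c = (p : ℤ_[p]) * (b + c) := by ring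
  ext i j
  fin_cases i <;> fin_cases j
  · simp [matFunc, hb, hc, h01, map_add]
  · simp [matFunc, hb, hc, h01, map_add]; ring
  · simp [matFunc, hb, hc, h01, map_add]; ring
  · simp [matFunc, hb, hc, h01, map_add]

lemma matFunc_algebraMap (x y : R) (r : ℤ_[p]) :
    matFunc p R x y (algebraMap ℤ_[p] (Matrix (Fin 2) (Fin 2) ℤ_[p]) r)
      = algebraMap ℤ_[p] (Matrix (Fin 2) (Fin 2) R) r := by
  ext i j
  fin_cases i <;> fin_cases j <;>
    simp [matFunc, Matrix.algebraMap_eq_diagonal]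

variable (p R) in
noncomputable def matHom (x y : R) (hxy : x * y = (p : R)) :
    Ealg p →ₐ[ℤ_[p]] Matrix (Fin 2) (Fin 2) R where
  toFun M := matFunc p R x y M.1
  map_one' := matFunc_one x y
  map_mul' M N := matFunc_mul x y hxy M.1 N.1 M.2 N.2
  map_zero' := matFunc_zero x y
  map_add' M N := matFunc_add x y M.1 N.1 M.2 N.2
  commutes' r := matFunc_algebraMap x y r

lemma matHom_E1 (x y : R) (hxy : x * y = (p : R)) :
    matHom p R x y hxy ⟨!![1, 0; 0, 0], memE1 p⟩ = !![1, 0; 0, 0] := by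
  ext i j
  fin_cases i <;> fin_cases j <;> simp [matHom, matFunc]

lemma matHom_E2 (x y : R) (hxy : x * y = (p : R)) :
    matHom p R x y hxy ⟨!![0, 0; 0, 1], memE2 p⟩ = !![0, 0; 0, 1] := by
  ext i j
  fin_cases i <;> fin_cases j <;> simp [matHom, matFunc]

lemma matHom_E12 (x y : R) (hxy : x * y = (p : R)) :
    matHom p R x y hxy ⟨!![0, (p : ℤ_[p]); 0, 0], memE12 p⟩ = !![0, x; 0, 0] := by
  ext i j
  fin_cases i <;> fin_cases j <;> simp [matHom, matFunc]

lemma matHom_E21 (x y : R) (hxy : x * y = (p : R)) :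
    matHom p R x y hxy ⟨!![0, 0; 1, 0], memE21 p⟩ = !![0, 0; y, 0] := by
  ext i j
  fin_cases i <;> fin_cases j <;> simp [matHom, matFunc]

/-- Decomposition of an element of `Ealg p` into the four generators. -/
lemma Ealg_decomp (M : Ealg p) :
    M = M.1 0 0 • (⟨!![1, 0; 0, 0], memE1 p⟩ : Ealg p)
      + pdiv p (M.1 0 1) • (⟨!![0, (p : ℤ_[p]); 0, 0], memE12 p⟩ : Ealg p)
      + M.1 1 0 • (⟨!![0, 0; 1, 0], memE21 p⟩ : Ealg p)
      + M.1 1 1 • (⟨!![0, 0; 0, 1], memE2 p⟩ : Ealg p) := by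
  apply Subtype.ext
  have hsp := pdiv_spec p M.2
  ext i j
  fin_cases i <;> fin_cases j <;>
    simp [smul_eq_mul]
  rw [mul_comm] at hsp
  exact hsp.symm

lemma hom_ext (φ ψ : Ealg p →ₐ[ℤ_[p]] Matrix (Fin 2) (Fin 2) R)
    (h1 : φ ⟨!![1, 0; 0, 0], memE1 p⟩ = ψ ⟨!![1, 0; 0, 0], memE1 p⟩)
    (h2 : φ ⟨!![0, (p : ℤ_[p]); 0, 0], memE12 p⟩ = ψ ⟨!![0, (p : ℤ_[p]); 0, 0], memE12 p⟩)
    (h3 : φ ⟨!![0, 0; 1, 0], memE21 p⟩ = ψ ⟨!![0, 0; 1, 0], memE21 p⟩)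
    (h4 : φ ⟨!![0, 0; 0, 1], memE2 p⟩ = ψ ⟨!![0, 0; 0, 1], memE2 p⟩) :
    φ = ψ := by
  apply AlgHom.ext
  intro M
  rw [Ealg_decomp M]
  simp only [map_add, _root_.map_smul, h1, h2, h3, h4]

lemma sandwich1 (N : Matrix (Fin 2) (Fin 2) R)
    (h : !![1, 0; 0, 0] * N * !![0, 0; 0, 1] = N) : N = !![0, N 0 1; 0, 0] := by
  conv_lhs => rw [← h]
  ext i j
  fin_cases i <;> fin_cases j <;> simp [Matrix.mul_apply, Fin.sum_univ_two, Matrix.vecMul, dotProduct]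

lemma sandwich2 (N : Matrix (Fin 2) (Fin 2) R)
    (h : !![0, 0; 0, 1] * N * !![1, 0; 0, 0] = N) : N = !![0, 0; N 1 0, 0] := by
  conv_lhs => rw [← h]
  ext i j
  fin_cases i <;> fin_cases j <;> simp [Matrix.mul_apply, Fin.sum_univ_two, Matrix.vecMul, dotProduct]

lemma key1 : (⟨!![1, 0; 0, 0], memE1 p⟩ : Ealg p) * ⟨!![0, (p : ℤ_[p]); 0, 0], memE12 p⟩
      * ⟨!![0, 0; 0, 1], memE2 p⟩ = ⟨!![0, (p : ℤ_[p]); 0, 0], memE12 p⟩ := by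
  apply Subtype.ext
  show !![1, 0; 0, 0] * !![0, (p : ℤ_[p]); 0, 0] * !![0, 0; 0, 1] = _
  ext i j
  fin_cases i <;> fin_cases j <;> simp [Matrix.mul_apply, Fin.sum_univ_two]

lemma key2 : (⟨!![0, 0; 0, 1], memE2 p⟩ : Ealg p) * ⟨!![0, 0; 1, 0], memE21 p⟩
      * ⟨!![1, 0; 0, 0], memE1 p⟩ = ⟨!![0, 0; 1, 0], memE21 p⟩ := by
  apply Subtype.ext
  show !![0, 0; 0, 1] * !![0, 0; 1, 0] * !![1, 0; 0, 0] = _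
  ext i j
  fin_cases i <;> fin_cases j <;> simp [Matrix.mul_apply, Fin.sum_univ_two]

lemma key3 : (⟨!![0, (p : ℤ_[p]); 0, 0], memE12 p⟩ : Ealg p) * ⟨!![0, 0; 1, 0], memE21 p⟩
      = (p : ℤ_[p]) • ⟨!![1, 0; 0, 0], memE1 p⟩ := by
  apply Subtype.ext
  show !![0, (p : ℤ_[p]); 0, 0] * !![0, 0; 1, 0] = ((p : ℤ_[p]) • (!![1, 0; 0, 0] :
    Matrix (Fin 2) (Fin 2) ℤ_[p]))
  ext i j
  fin_cases i <;> fin_cases j <;> simp [Matrix.mul_apply, Fin.sum_univ_two]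

lemma phi12 (φ : Ealg p →ₐ[ℤ_[p]] Matrix (Fin 2) (Fin 2) R)
    (h1 : φ ⟨!![1, 0; 0, 0], memE1 p⟩ = !![1, 0; 0, 0])
    (h2 : φ ⟨!![0, 0; 0, 1], memE2 p⟩ = !![0, 0; 0, 1]) :
    φ ⟨!![0, (p : ℤ_[p]); 0, 0], memE12 p⟩
      = !![0, (φ ⟨!![0, (p : ℤ_[p]); 0, 0], memE12 p⟩) 0 1; 0, 0] := by
  have key := congrArg φ (key1 (p := p))
  rw [_root_.map_mul, _root_.map_mul, h1, h2] at key
  exact sandwich1 _ key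

lemma phi21 (φ : Ealg p →ₐ[ℤ_[p]] Matrix (Fin 2) (Fin 2) R)
    (h1 : φ ⟨!![1, 0; 0, 0], memE1 p⟩ = !![1, 0; 0, 0])
    (h2 : φ ⟨!![0, 0; 0, 1], memE2 p⟩ = !![0, 0; 0, 1]) :
    φ ⟨!![0, 0; 1, 0], memE21 p⟩
      = !![0, 0; (φ ⟨!![0, 0; 1, 0], memE21 p⟩) 1 0, 0] := by
  have key := congrArg φ (key2 (p := p))
  rw [_root_.map_mul, _root_.map_mul, h1, h2] at key
  exact sandwich2 _ key

lemma phi_prod (φ : Ealg p →ₐ[ℤ_[p]] Matrix (Fin 2) (Fin 2) R)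
    (h1 : φ ⟨!![1, 0; 0, 0], memE1 p⟩ = !![1, 0; 0, 0])
    (h2 : φ ⟨!![0, 0; 0, 1], memE2 p⟩ = !![0, 0; 0, 1]) :
    (φ ⟨!![0, (p : ℤ_[p]); 0, 0], memE12 p⟩) 0 1
      * (φ ⟨!![0, 0; 1, 0], memE21 p⟩) 1 0 = (p : R) := by
  have key := congrArg φ (key3 (p := p))
  rw [_root_.map_mul, _root_.map_smul, h1, phi12 φ h1 h2, phi21 φ h1 h2] at key
  have := congrFun (congrFun key 0) 0
  simpa [Matrix.mul_apply, Fin.sum_univ_two, Algebra.smul_def] using this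

end aux

/-- For any commutative `ℤ_p`-algebra `R`, the `ℤ_p`-algebra homomorphisms
`Ealg p → M₂(R)` preserving the standard idempotents are in natural bijection with
`{(x, y) ∈ R² : x y = p}`, via `φ ↦ (φ(0 p; 0 0)₁₂, φ(0 0; 1 0)₂₁)`. -/
theorem stmt7 (p : ℕ) [Fact p.Prime] (R : Type*) [CommRing R] [Algebra ℤ_[p] R] :
    ∃ e : {φ : Ealg p →ₐ[ℤ_[p]] Matrix (Fin 2) (Fin 2) R //
        φ ⟨!![1, 0; 0, 0], by rw [mem_Ealg]; simp⟩ = !![1, 0; 0, 0] ∧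
        φ ⟨!![0, 0; 0, 1], by rw [mem_Ealg]; simp⟩ = !![0, 0; 0, 1]} ≃
        {xy : R × R // xy.1 * xy.2 = (p : R)},
      ∀ φ, ((e φ : R × R) =
        ((φ.1 ⟨!![0, (p : ℤ_[p]); 0, 0], by rw [mem_Ealg]; simp⟩) 0 1,
         (φ.1 ⟨!![0, 0; 1, 0], by rw [mem_Ealg]; simp⟩) 1 0)) := by
  refine ⟨{
    toFun := fun φ => ⟨((φ.1 ⟨!![0, (p : ℤ_[p]); 0, 0], memE12 p⟩) 0 1,
        (φ.1 ⟨!![0, 0; 1, 0], memE21 p⟩) 1 0), phi_prod φ.1 φ.2.1 φ.2.2⟩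
    invFun := fun z => ⟨matHom p R z.1.1 z.1.2 z.2, matHom_E1 _ _ _, matHom_E2 _ _ _⟩
    left_inv := ?_
    right_inv := ?_ }, fun φ => rfl⟩
  · intro φ
    apply Subtype.ext
    apply hom_ext
    · rw [matHom_E1]; exact φ.2.1.symm
    · rw [matHom_E12]; exact (phi12 φ.1 φ.2.1 φ.2.2).symm
    · rw [matHom_E21]; exact (phi21 φ.1 φ.2.1 φ.2.2).symm
    · rw [matHom_E2]; exact φ.2.2.symm
  · intro z
    apply Subtype.ext
    have h1 := matHom_E12 (p := p) (R := R) z.1.1 z.1.2 z.2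
    have h2 := matHom_E21 (p := p) (R := R) z.1.1 z.1.2 z.2
    have e1 : (matHom p R z.1.1 z.1.2 z.2 ⟨!![0, (p : ℤ_[p]); 0, 0], memE12 p⟩) 0 1
        = z.1.1 := by rw [h1]; simp
    have e2 : (matHom p R z.1.1 z.1.2 z.2 ⟨!![0, 0; 1, 0], memE21 p⟩) 1 0
        = z.1.2 := by rw [h2]; simp
    show (_, _) = z.1
    rw [e1, e2]
end
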